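/- Under a partition of X into k nonempty orbits with Gibbs kernel G, for π-reversible P one has ‖GP − Π‖²_{F,π} ≤ k − 1 and ‖GPG − Π‖²_{F,π} ≤ k − 1. In contrast, if P is π-stationary and lazy (P(x,x) ≥ 1/2 for all x), then ‖P − Π‖²_{F,π} ≥ n/4 − 1 where n = |X|. -/

import Mathlib

/-!
The Gibbs kernel `G` is a `π`-self-adjoint idempotent, and a reversible `P` is `π`-self-adjoint,
so `‖GP‖² = Tr(P G G P) = Tr(G P²)` and `‖GPG‖² = Tr(G · PGP)`. For stochastic `A`, `Tr(G A)`
is the trace of the projected `k × k` chain `Ā`, which is stochastic, hence `Tr(G A) ≤ k`.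
Subtracting `Π` lowers `‖M‖²` by exactly `1` for every `M` with unit row sums (row by row this is
the identity `∑ (m - π)² / π = ∑ m² / π - 1`). For lazy `Q` the diagonal alone already gives
`‖Q‖² ≥ ∑ Q(x,x)² ≥ n / 4`.
-/

open Finset Matrix

namespace GpgStmt

noncomputable section

variable {X : Type*}

/-- Matrix with all rows equal to π. -/
def Pimat {X : Type*} (π : X → ℝ) : Matrix X X ℝ := Matrix.of fun _ y => π y

def IsStochastic [Fintype X] (P : Matrix X X ℝ) : Prop :=
  (∀ x y, 0 ≤ P x y) ∧ ∀ x, ∑ y, P x y = 1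

/-- π-stationary transition matrix. -/
def IsStationary [Fintype X] (π : X → ℝ) (P : Matrix X X ℝ) : Prop :=
  IsStochastic P ∧ ∀ y, ∑ x, π x * P x y = π y

/-- π-reversible transition matrix. -/
def IsReversible [Fintype X] (π : X → ℝ) (P : Matrix X X ℝ) : Prop :=
  IsStochastic P ∧ ∀ x y, π x * P x y = π y * P y x

/-- mass of the orbit O_i = {x | o x = i}. -/
def orbMass [Fintype X] {k : ℕ} (π : X → ℝ) (o : X → Fin k) (i : Fin k) : ℝ :=
  ∑ x ∈ Finset.filter (fun x => o x = i) Finset.univ, π x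

/-- Gibbs kernel of the orbit partition induced by o. -/
def gibbs [Fintype X] {k : ℕ} (π : X → ℝ) (o : X → Fin k) : Matrix X X ℝ :=
  Matrix.of fun x y => if o x = o y then π y / orbMass π o (o x) else 0

/-- Projection chain P̄ of P with respect to the orbit partition induced by o. -/
def projChain [Fintype X] {k : ℕ} (π : X → ℝ) (o : X → Fin k) (P : Matrix X X ℝ) :
    Matrix (Fin k) (Fin k) ℝ :=
  Matrix.of fun i j => (1 / orbMass π o i) *
    ∑ x ∈ Finset.filter (fun x => o x = i) Finset.univ,
      ∑ y ∈ Finset.filter (fun y => o y = j) Finset.univ, π x * P x y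

/-- π-weighted KL divergence between transition matrices, with 0·log(0/a) = 0. -/
def klDiv {X : Type*} [Fintype X] (π : X → ℝ) (Q R : Matrix X X ℝ) : ℝ :=
  ∑ x, ∑ y, π x * Q x y * Real.log (Q x y / R x y)

/-- ℓ²(π)-adjoint of a matrix. -/
def piAdj [Fintype X] (π : X → ℝ) (M : Matrix X X ℝ) : Matrix X X ℝ :=
  Matrix.of fun x y => π y * M y x / π x

/-- squared π-weighted Frobenius norm ‖M‖²_{F,π} = Tr(M*M). -/
def frobSq [Fintype X] (π : X → ℝ) (M : Matrix X X ℝ) : ℝ :=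
  Matrix.trace (piAdj π M * M)

/-- π-mass of a finite set. -/
def mass [Fintype X] (π : X → ℝ) (S : Finset X) : ℝ := ∑ x ∈ S, π x

/-- Two-block Gibbs kernel G_S for the partition X = S ⊔ Sᶜ. -/
def gibbsTwo [Fintype X] [DecidableEq X] (π : X → ℝ) (S : Finset X) : Matrix X X ℝ :=
  Matrix.of fun x y =>
    if x ∈ S then (if y ∈ S then π y / mass π S else 0)
    else (if y ∈ S then 0 else π y / mass π Sᶜ)

/-- g(S) = (1/(π(S)π(S'))) Σ_{x∈S,y∈S'} π(x) P²(x,y). -/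
def gfun [Fintype X] [DecidableEq X] (π : X → ℝ) (P : Matrix X X ℝ) (S : Finset X) : ℝ :=
  (1 / (mass π S * mass π Sᶜ)) * ∑ x ∈ S, ∑ y ∈ Sᶜ, π x * (P * P) x y

/-- h(S) = (1/π(S)) Σ_{x∈S,y∈S'} π(x) P²(x,y). -/
def hfun [Fintype X] [DecidableEq X] (π : X → ℝ) (P : Matrix X X ℝ) (S : Finset X) : ℝ :=
  (1 / mass π S) * ∑ x ∈ S, ∑ y ∈ Sᶜ, π x * (P * P) x y

/-- Ergodicity (primitivity): some power of P has all entries positive. -/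
def IsErgodic [Fintype X] [DecidableEq X] (P : Matrix X X ℝ) : Prop :=
  ∃ m : ℕ, ∀ x y, 0 < (P ^ m) x y

/-- Shannon entropy of π. -/
def shannonEnt [Fintype X] (π : X → ℝ) : ℝ := -∑ x, π x * Real.log (π x)

/-- Entropy rate H_π(Q). -/
def entRate [Fintype X] (π : X → ℝ) (Q : Matrix X X ℝ) : ℝ :=
  -∑ x, ∑ y, π x * Q x y * Real.log (Q x y)

/-- Supermodular set function on 2^X. -/
def Supermodular {X : Type*} [DecidableEq X] (F : Finset X → ℝ) : Prop :=
  ∀ A B : Finset X, F A + F B ≤ F (A ∩ B) + F (A ∪ B)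

/-- Submodular set function on 2^X. -/
def Submodular {X : Type*} [DecidableEq X] (F : Finset X → ℝ) : Prop :=
  ∀ A B : Finset X, F (A ∩ B) + F (A ∪ B) ≤ F A + F B

section Stochastic

variable [Fintype X]

lemma IsStochastic.mul {A B : Matrix X X ℝ} (hA : IsStochastic A) (hB : IsStochastic B) :
    IsStochastic (A * B) := by
  classical
  rw [IsStochastic, ← mem_rowStochastic_iff_sum] at *
  exact Submonoid.mul_mem _ hA hB

lemma IsStochastic.trace_le_card {M : Matrix X X ℝ} (hM : IsStochastic M) :
    M.trace ≤ Fintype.card X := by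
  have hdiag : ∀ x, M x x ≤ 1 := fun x =>
    hM.2 x ▸ Finset.single_le_sum (fun y _ => hM.1 x y) (Finset.mem_univ x)
  simpa [Matrix.trace] using Finset.sum_le_sum fun x (_ : x ∈ Finset.univ) => hdiag x

end Stochastic

section FrobeniusNorm

variable [Fintype X] {π : X → ℝ}

lemma frobSq_eq_sum (M : Matrix X X ℝ) :
    frobSq π M = ∑ y, π y * ∑ x, M y x ^ 2 / π x := by
  simp only [frobSq, Matrix.trace, Matrix.diag, Matrix.mul_apply, piAdj, Matrix.of_apply,
    Finset.mul_sum]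
  rw [Finset.sum_comm]
  exact Finset.sum_congr rfl fun _ _ => Finset.sum_congr rfl fun _ _ => by ring

lemma sum_sq_sub_div_eq (hπ : ∀ x, π x ≠ 0) (hπ1 : ∑ x, π x = 1) {m : X → ℝ}
    (hm : ∑ x, m x = 1) : ∑ x, (m x - π x) ^ 2 / π x = ∑ x, m x ^ 2 / π x - 1 := by
  have hterm : ∀ x, (m x - π x) ^ 2 / π x = m x ^ 2 / π x - 2 * m x + π x := fun x => by
    field_simp [hπ x]
    ring
  simp only [hterm, Finset.sum_add_distrib, Finset.sum_sub_distrib, ← Finset.mul_sum, hm, hπ1]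
  ring

lemma frobSq_sub_pimat (hπ : ∀ x, π x ≠ 0) (hπ1 : ∑ x, π x = 1) {M : Matrix X X ℝ}
    (hM : ∀ x, ∑ y, M x y = 1) : frobSq π (M - Pimat π) = frobSq π M - 1 := by
  simp only [frobSq_eq_sum, Matrix.sub_apply, Pimat, Matrix.of_apply,
    sum_sq_sub_div_eq hπ hπ1 (hM _), mul_sub, Finset.sum_sub_distrib, mul_one, hπ1]

lemma sum_diag_sq_le_frobSq (hπ : ∀ x, 0 < π x) (M : Matrix X X ℝ) :
    ∑ x, M x x ^ 2 ≤ frobSq π M := by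
  rw [frobSq_eq_sum]
  refine Finset.sum_le_sum fun y _ => ?_
  calc M y y ^ 2 = π y * (M y y ^ 2 / π y) := by field_simp [(hπ y).ne']
    _ ≤ π y * ∑ x, M y x ^ 2 / π x := by
      gcongr
      · exact (hπ y).le
      · exact Finset.single_le_sum (f := fun x => M y x ^ 2 / π x)
          (fun x _ => div_nonneg (sq_nonneg _) (hπ x).le) (Finset.mem_univ y)

lemma piAdj_mul (hπ : ∀ x, π x ≠ 0) (A B : Matrix X X ℝ) :
    piAdj π (A * B) = piAdj π B * piAdj π A := by
  ext x y
  simp only [piAdj, of_apply, mul_apply, Finset.mul_sum, Finset.sum_div]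
  refine Finset.sum_congr rfl fun z _ => ?_
  field_simp [hπ x, hπ z]

lemma IsReversible.piAdj_eq (hπ : ∀ x, π x ≠ 0) {P : Matrix X X ℝ} (hP : IsReversible π P) :
    piAdj π P = P := by
  ext x y
  simp only [piAdj, of_apply, ← hP.2 x y]
  field_simp [hπ x]

variable {E P : Matrix X X ℝ}

lemma frobSq_mul_of_idempotent (hπ : ∀ x, π x ≠ 0) (hE : piAdj π E = E) (hEE : E * E = E)
    (hP : piAdj π P = P) : frobSq π (E * P) = trace (E * (P * P)) := by
  rw [frobSq, piAdj_mul hπ, hE, hP, Matrix.mul_assoc, ← Matrix.mul_assoc E, hEE,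
    trace_mul_comm, Matrix.mul_assoc]

lemma frobSq_mul_mul_of_idempotent (hπ : ∀ x, π x ≠ 0) (hE : piAdj π E = E) (hEE : E * E = E)
    (hP : piAdj π P = P) : frobSq π (E * P * E) = trace (E * (P * E * P)) := by
  have hcollapse : E * (P * E) * (E * P * E) = E * (P * E * P) * E := by
    simp only [Matrix.mul_assoc]
    rw [← Matrix.mul_assoc E E, hEE]
  rw [frobSq, piAdj_mul hπ, piAdj_mul hπ, hE, hP, hcollapse, trace_mul_comm,
    ← Matrix.mul_assoc, hEE]

end FrobeniusNorm

section Gibbs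

variable [Fintype X] {k : ℕ} {π : X → ℝ} {o : X → Fin k}

lemma orbMass_pos (hπ : ∀ x, 0 < π x) {i : Fin k} (hi : ∃ x, o x = i) :
    0 < orbMass π o i := by
  obtain ⟨x, hx⟩ := hi
  exact Finset.sum_pos (fun y _ => hπ y) ⟨x, by simp [hx]⟩

lemma isStochastic_gibbs (hπ : ∀ x, 0 < π x) : IsStochastic (gibbs π o) := by
  refine ⟨fun x y => ?_, fun x => ?_⟩
  · simp only [gibbs, of_apply]
    split_ifs
    · exact div_nonneg (hπ y).le (orbMass_pos hπ ⟨x, rfl⟩).le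
    · exact le_rfl
  · simp only [gibbs, of_apply, eq_comm (a := o x)]
    rw [← Finset.sum_filter, ← Finset.sum_div]
    exact div_self (orbMass_pos hπ ⟨x, rfl⟩).ne'

lemma piAdj_gibbs (hπ : ∀ x, π x ≠ 0) : piAdj π (gibbs π o) = gibbs π o := by
  ext x y
  simp only [piAdj, gibbs, of_apply]
  by_cases h : o x = o y
  · rw [if_pos h.symm, if_pos h, h]
    field_simp [hπ x]
  · rw [if_neg (Ne.symm h), if_neg h, mul_zero, zero_div]

lemma gibbs_mul_gibbs (hπ : ∀ x, 0 < π x) : gibbs π o * gibbs π o = gibbs π o := by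
  ext x y
  calc (gibbs π o * gibbs π o) x y
      = ∑ z, if o z = o x then π z / orbMass π o (o x) * gibbs π o x y else 0 := by
        refine Finset.sum_congr rfl fun z _ => ?_
        simp only [gibbs, of_apply]
        split_ifs <;> simp_all
    _ = orbMass π o (o x) / orbMass π o (o x) * gibbs π o x y := by
        rw [← Finset.sum_filter, ← Finset.sum_mul, ← Finset.sum_div]
        rfl
    _ = gibbs π o x y := by
        rw [div_self (orbMass_pos hπ ⟨x, rfl⟩).ne', one_mul]

lemma trace_gibbs_mul (A : Matrix X X ℝ) :
    trace (gibbs π o * A) = trace (projChain π o A) := by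
  simp only [Matrix.trace, Matrix.diag, Matrix.mul_apply, projChain, gibbs, of_apply]
  rw [← Finset.sum_fiberwise Finset.univ o]
  refine Finset.sum_congr rfl fun i _ => ?_
  calc _ = ∑ x ∈ univ.filter (o · = i), ∑ z ∈ univ.filter (o · = i),
        1 / orbMass π o i * (π z * A z x) := by
        refine Finset.sum_congr rfl fun x hx => ?_
        rw [(Finset.mem_filter.1 hx).2, Finset.sum_filter]
        refine Finset.sum_congr rfl fun z _ => ?_
        by_cases hz : o z = i
        · rw [if_pos hz.symm, if_pos hz]
          ring
        · rw [if_neg (Ne.symm hz), if_neg hz, zero_mul]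
    _ = _ := by
        rw [Finset.sum_comm]
        simp only [Finset.mul_sum]

lemma isStochastic_projChain (hπ : ∀ x, 0 < π x) (ho : Function.Surjective o)
    {A : Matrix X X ℝ} (hA : IsStochastic A) : IsStochastic (projChain π o A) := by
  refine ⟨fun i j => ?_, fun i => ?_⟩
  · exact mul_nonneg (one_div_nonneg.2 (orbMass_pos hπ (ho i)).le)
      (Finset.sum_nonneg fun x _ => Finset.sum_nonneg fun y _ =>
        mul_nonneg (hπ x).le (hA.1 x y))
  · simp only [projChain, of_apply]
    rw [← Finset.mul_sum, Finset.sum_comm]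
    simp only [Finset.sum_fiberwise, ← Finset.mul_sum, hA.2, mul_one]
    exact one_div_mul_cancel (orbMass_pos hπ (ho i)).ne'

lemma trace_gibbs_mul_le (hπ : ∀ x, 0 < π x) (ho : Function.Surjective o)
    {A : Matrix X X ℝ} (hA : IsStochastic A) : trace (gibbs π o * A) ≤ k := by
  simpa [trace_gibbs_mul] using (isStochastic_projChain hπ ho hA).trace_le_card

end Gibbs

theorem stmt13_general [Fintype X] {k : ℕ} (π : X → ℝ) (o : X → Fin k)
    (hπ : ∀ x, 0 < π x) (hsum : ∑ x, π x = 1) (ho : Function.Surjective o)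
    (P : Matrix X X ℝ) (hP : IsReversible π P)
    (Q : Matrix X X ℝ) (hQ : IsStationary π Q) (hlazy : ∀ x, 1 / 2 ≤ Q x x) :
    frobSq π (gibbs π o * P - Pimat π) ≤ (k : ℝ) - 1 ∧
    frobSq π (gibbs π o * P * gibbs π o - Pimat π) ≤ (k : ℝ) - 1 ∧
    (Fintype.card X : ℝ) / 4 - 1 ≤ frobSq π (Q - Pimat π) := by
  have hπ0 : ∀ x, π x ≠ 0 := fun x => (hπ x).ne'
  have hG : IsStochastic (gibbs π o) := isStochastic_gibbs hπ
  have hGadj : piAdj π (gibbs π o) = gibbs π o := piAdj_gibbs hπ0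
  have hGG : gibbs π o * gibbs π o = gibbs π o := gibbs_mul_gibbs hπ
  have hPadj : piAdj π P = P := hP.piAdj_eq hπ0
  refine ⟨?_, ?_, ?_⟩
  · rw [frobSq_sub_pimat hπ0 hsum (hG.mul hP.1).2,
      frobSq_mul_of_idempotent hπ0 hGadj hGG hPadj]
    linarith [trace_gibbs_mul_le hπ ho (hP.1.mul hP.1)]
  · rw [frobSq_sub_pimat hπ0 hsum ((hG.mul hP.1).mul hG).2,
      frobSq_mul_mul_of_idempotent hπ0 hGadj hGG hPadj]
    linarith [trace_gibbs_mul_le hπ ho ((hP.1.mul hG).mul hP.1)]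
  · have hdiag : (Fintype.card X : ℝ) / 4 ≤ ∑ x, Q x x ^ 2 :=
      calc (Fintype.card X : ℝ) / 4 = ∑ _x : X, (1 / 2 : ℝ) ^ 2 := by
            rw [Finset.sum_const, Finset.card_univ, nsmul_eq_mul]
            ring
        _ ≤ ∑ x, Q x x ^ 2 := Finset.sum_le_sum fun x _ =>
            pow_le_pow_left₀ (by norm_num) (hlazy x) 2
    rw [frobSq_sub_pimat hπ0 hsum hQ.1.2]
    linarith [sum_diag_sq_le_frobSq hπ Q]

/-- ‖GP − Π‖²_{F,π} ≤ k − 1 and ‖GPG − Π‖²_{F,π} ≤ k − 1 for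
π-reversible P, while ‖Q − Π‖²_{F,π} ≥ n/4 − 1 for π-stationary lazy Q. -/
theorem stmt13 [Fintype X] [DecidableEq X] {k : ℕ} (π : X → ℝ) (o : X → Fin k)
    (hπ : ∀ x, 0 < π x) (hsum : ∑ x, π x = 1) (ho : Function.Surjective o)
    (P : Matrix X X ℝ) (hP : IsReversible π P)
    (Q : Matrix X X ℝ) (hQ : IsStationary π Q) (hlazy : ∀ x, 1 / 2 ≤ Q x x) :
    frobSq π (gibbs π o * P - Pimat π) ≤ (k : ℝ) - 1 ∧
    frobSq π (gibbs π o * P * gibbs π o - Pimat π) ≤ (k : ℝ) - 1 ∧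
    (Fintype.card X : ℝ) / 4 - 1 ≤ frobSq π (Q - Pimat π) :=
  stmt13_general π o hπ hsum ho P hP Q hQ hlazy

end
end GpgStmt
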